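/- arXiv:1507.05113 — 5 statements merged into one kernel-verified Lean document; each statement's English description precedes it below -/
import Mathlib

section
/- Let d ≥ 1, x0 ∈ ℝ^d, p, q ≥ 1, and let X belong to L^{max(p,q)} on a neighborhood of x0. Suppose X ∈ T^p_α(x0) and X ∈ T^q_β(x0), both witnessed by the same polynomial P. Let γ ∈ (0,1) and define s by 1/s = γ/p + (1-γ)/q. Then X ∈ T^s_δ(x0) with δ = γα + (1-γ)β, witnessed by the same polynomial P; more precisely there is a constant C such that the L^s norm of X - P on B(x0,r) satisfies ‖X - P‖_{L^s(B(x0,r))} ≤ C r^{γ(α + d/p) + (1-γ)(β + d/q)} for small r. Consequently the map r ↦ h_{1/r}(x0) is concave on its interval of definition. -/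
/-!
On a ball, write `|X - P|^s = |X - P|^{γs} · |X - P|^{(1-γ)s}` and apply Hölder with the
conjugate exponents `p/(γs)` and `q/((1-γ)s)`: this gives the log-convexity
`‖F‖_s ≤ ‖F‖_p^γ ‖F‖_q^{1-γ}` of the `L^p` norms. Undoing the normalisation `a^{-d}` in the
two hypotheses turns them into bounds `‖X - P‖_{L^p(B(x0,r))} ≤ C_p r^{α + d/p}` (and likewise
for `q`), whose geometric mean is the first claim; normalising again by `r^{-d/s}` gives the
exponent `γα + (1-γ)β`, since `d/s = γ d/p + (1-γ) d/q`.
-/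

open MeasureTheory

/-- `X ∈ T^p_α(x0)`. -/
def TpAt (d : ℕ) (p : ℝ) (X : EuclideanSpace ℝ (Fin d) → ℝ)
    (x0 : EuclideanSpace ℝ (Fin d)) (α : ℝ) : Prop :=
  ∃ C : ℝ, 0 < C ∧ ∃ P : MvPolynomial (Fin d) ℝ,
    (P = 0 ∨ (P.totalDegree : ℝ) < α) ∧
    ∃ a0 : ℝ, 0 < a0 ∧ ∀ a : ℝ, 0 < a → a < a0 →
      (a ^ (-(d : ℝ)) *
          ∫ u in Metric.ball x0 a, |X u - MvPolynomial.eval (fun i => u i) P| ^ p) ^ (1 / p)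
        ≤ C * a ^ α

section Interpolation

variable {Ω : Type*} [MeasurableSpace Ω] {μ : Measure Ω} {F : Ω → ℝ}

theorem MeasureTheory.MemLp.abs_rpow_div {p a : ℝ} (ha : 0 < a)
    (hF : MemLp F (ENNReal.ofReal p) μ) :
    MemLp (fun u => |F u| ^ a) (ENNReal.ofReal (p / a)) μ := by
  have := hF.norm_rpow_div (ENNReal.ofReal a)
  rw [ENNReal.toReal_ofReal ha.le, ← ENNReal.ofReal_div_of_pos ha] at this
  simpa only [Real.norm_eq_abs] using this

theorem integral_abs_rpow_add_le {p q a b : ℝ} (hp : 0 < p) (hq : 0 < q) (ha : 0 < a)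
    (hb : 0 < b) (hab : a / p + b / q = 1)
    (hFp : MemLp F (ENNReal.ofReal p) μ) (hFq : MemLp F (ENNReal.ofReal q) μ) :
    ∫ u, |F u| ^ (a + b) ∂μ ≤
      (∫ u, |F u| ^ p ∂μ) ^ (a / p) * (∫ u, |F u| ^ q ∂μ) ^ (b / q) := by
  have hconj : (p / a).HolderConjugate (q / b) := by
    refine Real.holderConjugate_iff.2 ⟨?_, by simpa only [inv_div] using hab⟩
    rw [one_lt_div ha, ← div_lt_one hp]
    linarith [div_pos hb hq]
  have holder := integral_mul_le_Lp_mul_Lq_of_nonneg hconj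
    (.of_forall fun u => by positivity) (.of_forall fun u => by positivity)
    (hFp.abs_rpow_div ha) (hFq.abs_rpow_div hb)
  have hpow {c e : ℝ} (hc : 0 < c) (u : Ω) : (|F u| ^ c) ^ (e / c) = |F u| ^ e := by
    rw [← Real.rpow_mul (abs_nonneg _), mul_div_cancel₀ _ hc.ne']
  simp only [hpow ha, hpow hb, one_div_div] at holder
  have hsplit (u : Ω) : |F u| ^ (a + b) = |F u| ^ a * |F u| ^ b :=
    Real.rpow_add' (abs_nonneg _) (by positivity)
  simpa only [hsplit] using holder

theorem rpow_integral_abs_rpow_le_interpolate {p q s γ A B : ℝ} (hp : 0 < p) (hq : 0 < q)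
    (hγ0 : 0 < γ) (hγ1 : γ < 1) (hs : 1 / s = γ / p + (1 - γ) / q)
    (hFp : MemLp F (ENNReal.ofReal p) μ) (hFq : MemLp F (ENNReal.ofReal q) μ)
    (hA : (∫ u, |F u| ^ p ∂μ) ^ (1 / p) ≤ A) (hB : (∫ u, |F u| ^ q ∂μ) ^ (1 / q) ≤ B) :
    (∫ u, |F u| ^ s ∂μ) ^ (1 / s) ≤ A ^ γ * B ^ (1 - γ) := by
  have hs0 : 0 < s := one_div_pos.1 (hs ▸ by positivity)
  have hIp : 0 ≤ ∫ u, |F u| ^ p ∂μ := integral_nonneg fun u => by positivity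
  have hIq : 0 ≤ ∫ u, |F u| ^ q ∂μ := integral_nonneg fun u => by positivity
  have hsum : γ * s / p + (1 - γ) * s / q = 1 := by
    rw [mul_div_right_comm, mul_div_right_comm (1 - γ), ← add_mul, ← hs,
      one_div_mul_cancel hs0.ne']
  have key := integral_abs_rpow_add_le hp hq (by positivity) (by nlinarith) hsum hFp hFq
  rw [← add_mul, add_sub_cancel, one_mul] at key
  calc (∫ u, |F u| ^ s ∂μ) ^ (1 / s)
      ≤ ((∫ u, |F u| ^ p ∂μ) ^ (γ * s / p) *
          (∫ u, |F u| ^ q ∂μ) ^ ((1 - γ) * s / q)) ^ (1 / s) :=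
        Real.rpow_le_rpow (integral_nonneg fun u => by positivity) key (by positivity)
    _ = ((∫ u, |F u| ^ p ∂μ) ^ (1 / p)) ^ γ * ((∫ u, |F u| ^ q ∂μ) ^ (1 / q)) ^ (1 - γ) := by
        rw [Real.mul_rpow (by positivity) (by positivity), ← Real.rpow_mul hIp,
          ← Real.rpow_mul hIq, ← Real.rpow_mul hIp, ← Real.rpow_mul hIq]
        congr 2 <;> field_simp
    _ ≤ A ^ γ * B ^ (1 - γ) := by
        gcongr
        exact Real.rpow_nonneg ((Real.rpow_nonneg hIp _).trans hA) _

end Interpolation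

theorem rpow_neg_mul_rpow_le_iff {r J D t C a : ℝ} (hr : 0 < r) (hJ : 0 ≤ J) :
    (r ^ (-D) * J) ^ (1 / t) ≤ C * r ^ a ↔ J ^ (1 / t) ≤ C * r ^ (a + D / t) := by
  have hscale : (r ^ (-D) * J) ^ (1 / t) = (r ^ (D / t))⁻¹ * J ^ (1 / t) := by
    rw [Real.mul_rpow (by positivity) hJ, ← Real.rpow_mul hr.le, ← Real.rpow_neg hr.le]
    ring_nf
  rw [hscale, inv_mul_le_iff₀ (by positivity), Real.rpow_add hr]
  ring_nf

theorem mul_rpow_mul_mul_rpow {A B r a b γ δ : ℝ} (hA : 0 ≤ A) (hB : 0 ≤ B) (hr : 0 < r) :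
    (A * r ^ a) ^ γ * (B * r ^ b) ^ δ = A ^ γ * B ^ δ * r ^ (γ * a + δ * b) := by
  rw [Real.mul_rpow hA (by positivity), Real.mul_rpow hB (by positivity),
    ← Real.rpow_mul hr.le, ← Real.rpow_mul hr.le, mul_mul_mul_comm, ← Real.rpow_add hr,
    mul_comm a, mul_comm b]

theorem MeasureTheory.MemLp.sub_continuous_restrict_ball {E : Type*} [PseudoMetricSpace E]
    [ProperSpace E] [MeasurableSpace E] [OpensMeasurableSpace E] {μ : Measure E}
    [IsFiniteMeasureOnCompacts μ] {X g : E → ℝ} {p p' : ENNReal} {x0 : E} {R r : ℝ}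
    (hX : MemLp X p (μ.restrict (Metric.ball x0 R))) (hg : Continuous g) (hr : r ≤ R)
    (hp' : p' ≤ p) :
    MemLp (fun u => X u - g u) p' (μ.restrict (Metric.ball x0 r)) := by
  have : IsFiniteMeasure (μ.restrict (Metric.ball x0 r)) :=
    isFiniteMeasure_restrict.2 measure_ball_lt_top.ne
  obtain ⟨M, hM⟩ := (isCompact_closedBall x0 r).exists_bound_of_continuousOn hg.continuousOn
  have hg_top : MemLp g ⊤ (μ.restrict (Metric.ball x0 r)) := by
    refine memLp_top_of_bound hg.aestronglyMeasurable M ?_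
    filter_upwards [ae_restrict_mem measurableSet_ball] with u hu
    exact hM u (Metric.ball_subset_closedBall hu)
  have hX_r := hX.mono_measure (Measure.restrict_mono (Metric.ball_subset_ball hr) le_rfl)
  exact (hX_r.mono_exponent hp').sub (hg_top.mono_exponent le_top)

theorem stmt2_general (d : ℕ) (p q : ℝ) (hp : 1 ≤ p) (hq : 1 ≤ q)
    (x0 : EuclideanSpace ℝ (Fin d)) (X : EuclideanSpace ℝ (Fin d) → ℝ)
    (hX : ∃ r : ℝ, 0 < r ∧
      MemLp X (ENNReal.ofReal (max p q)) (volume.restrict (Metric.ball x0 r)))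
    (α β : ℝ) (P : MvPolynomial (Fin d) ℝ)
    (hdegα : P = 0 ∨ (P.totalDegree : ℝ) < α)
    (hdegβ : P = 0 ∨ (P.totalDegree : ℝ) < β)
    (Cp : ℝ) (hCp : 0 < Cp) (ap : ℝ) (hap : 0 < ap)
    (hestp : ∀ a : ℝ, 0 < a → a < ap →
      (a ^ (-(d : ℝ)) *
          ∫ u in Metric.ball x0 a, |X u - MvPolynomial.eval (fun i => u i) P| ^ p) ^ (1 / p)
        ≤ Cp * a ^ α)
    (Cq : ℝ) (hCq : 0 < Cq) (aq : ℝ) (haq : 0 < aq)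
    (hestq : ∀ a : ℝ, 0 < a → a < aq →
      (a ^ (-(d : ℝ)) *
          ∫ u in Metric.ball x0 a, |X u - MvPolynomial.eval (fun i => u i) P| ^ q) ^ (1 / q)
        ≤ Cq * a ^ β)
    (γ : ℝ) (hγ0 : 0 < γ) (hγ1 : γ < 1)
    (s : ℝ) (hs : 1 / s = γ / p + (1 - γ) / q) :
    (∃ C : ℝ, 0 < C ∧ ∃ r0 : ℝ, 0 < r0 ∧ ∀ r : ℝ, 0 < r → r < r0 →
      (∫ u in Metric.ball x0 r, |X u - MvPolynomial.eval (fun i => u i) P| ^ s) ^ (1 / s)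
        ≤ C * r ^ (γ * (α + (d : ℝ) / p) + (1 - γ) * (β + (d : ℝ) / q))) ∧
    (P = 0 ∨ (P.totalDegree : ℝ) < γ * α + (1 - γ) * β) ∧
    (∃ C' : ℝ, 0 < C' ∧ ∃ r1 : ℝ, 0 < r1 ∧ ∀ r : ℝ, 0 < r → r < r1 →
      (r ^ (-(d : ℝ)) *
          ∫ u in Metric.ball x0 r, |X u - MvPolynomial.eval (fun i => u i) P| ^ s) ^ (1 / s)
        ≤ C' * r ^ (γ * α + (1 - γ) * β)) := by
  obtain ⟨R, hR, hXR⟩ := hX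
  have hP : Continuous fun u : EuclideanSpace ℝ (Fin d) => MvPolynomial.eval (fun i => u i) P :=
    P.continuous_eval.comp (continuous_pi fun i => PiLp.continuous_apply _ _ i)
  set F := fun u => X u - MvPolynomial.eval (fun i => u i) P
  have hF {t r : ℝ} (ht : t ≤ max p q) (hr : r ≤ R) :
      MemLp F (ENNReal.ofReal t) (volume.restrict (Metric.ball x0 r)) :=
    hXR.sub_continuous_restrict_ball hP hr (ENNReal.ofReal_le_ofReal ht)
  set C := Cp ^ γ * Cq ^ (1 - γ)
  set r0 := min R (min ap aq)
  have hball : ∀ r : ℝ, 0 < r → r < r0 → (∫ u in Metric.ball x0 r, |F u| ^ s) ^ (1 / s)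
      ≤ C * r ^ (γ * (α + (d : ℝ) / p) + (1 - γ) * (β + (d : ℝ) / q)) := by
    intro r hr hrr0
    obtain ⟨hrR, hrap, hraq⟩ : r < R ∧ r < ap ∧ r < aq := by
      simpa only [r0, lt_min_iff] using hrr0
    have hbp := (rpow_neg_mul_rpow_le_iff hr (integral_nonneg fun u => by positivity)).1
      (hestp r hr hrap)
    have hbq := (rpow_neg_mul_rpow_le_iff hr (integral_nonneg fun u => by positivity)).1
      (hestq r hr hraq)
    rw [← mul_rpow_mul_mul_rpow hCp.le hCq.le hr]
    exact rpow_integral_abs_rpow_le_interpolate (by linarith) (by linarith) hγ0 hγ1 hs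
      (hF (le_max_left p q) hrR.le) (hF (le_max_right p q) hrR.le) hbp hbq
  have hdeg : P = 0 ∨ (P.totalDegree : ℝ) < γ * α + (1 - γ) * β :=
    hdegα.elim Or.inl fun hα => hdegβ.imp_right fun hβ => by nlinarith
  have hr0 : 0 < r0 := lt_min hR (lt_min hap haq)
  refine ⟨⟨C, by positivity, r0, hr0, hball⟩, hdeg,
    C, by positivity, r0, hr0, fun r hr hrr0 => ?_⟩
  rw [rpow_neg_mul_rpow_le_iff hr (integral_nonneg fun u => by positivity)]
  convert hball r hr hrr0 using 3
  rw [div_eq_mul_one_div _ s, hs]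
  ring

/-- interpolation: if `X ∈ T^p_α(x0)` and `X ∈ T^q_β(x0)`, both witnessed by
the same polynomial `P`, and `1/s = γ/p + (1-γ)/q` with `γ ∈ (0,1)`, then
`‖X - P‖_{L^s(B(x0,r))} ≤ C r^{γ(α+d/p)+(1-γ)(β+d/q)}` for small `r`, and `X ∈ T^s_δ(x0)`
with `δ = γα + (1-γ)β`, witnessed by the same `P`.  (This yields the concavity of
`r ↦ h_{1/r}(x0)`.) -/
theorem stmt2 (d : ℕ) (hd : 1 ≤ d) (p q : ℝ) (hp : 1 ≤ p) (hq : 1 ≤ q)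
    (x0 : EuclideanSpace ℝ (Fin d)) (X : EuclideanSpace ℝ (Fin d) → ℝ)
    (hX : ∃ r : ℝ, 0 < r ∧
      MemLp X (ENNReal.ofReal (max p q)) (volume.restrict (Metric.ball x0 r)))
    (α β : ℝ) (P : MvPolynomial (Fin d) ℝ)
    (hdegα : P = 0 ∨ (P.totalDegree : ℝ) < α)
    (hdegβ : P = 0 ∨ (P.totalDegree : ℝ) < β)
    (Cp : ℝ) (hCp : 0 < Cp) (ap : ℝ) (hap : 0 < ap)
    (hestp : ∀ a : ℝ, 0 < a → a < ap →
      (a ^ (-(d : ℝ)) *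
          ∫ u in Metric.ball x0 a, |X u - MvPolynomial.eval (fun i => u i) P| ^ p) ^ (1 / p)
        ≤ Cp * a ^ α)
    (Cq : ℝ) (hCq : 0 < Cq) (aq : ℝ) (haq : 0 < aq)
    (hestq : ∀ a : ℝ, 0 < a → a < aq →
      (a ^ (-(d : ℝ)) *
          ∫ u in Metric.ball x0 a, |X u - MvPolynomial.eval (fun i => u i) P| ^ q) ^ (1 / q)
        ≤ Cq * a ^ β)
    (γ : ℝ) (hγ0 : 0 < γ) (hγ1 : γ < 1)
    (s : ℝ) (hs : 1 / s = γ / p + (1 - γ) / q) :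
    (∃ C : ℝ, 0 < C ∧ ∃ r0 : ℝ, 0 < r0 ∧ ∀ r : ℝ, 0 < r → r < r0 →
      (∫ u in Metric.ball x0 r, |X u - MvPolynomial.eval (fun i => u i) P| ^ s) ^ (1 / s)
        ≤ C * r ^ (γ * (α + (d : ℝ) / p) + (1 - γ) * (β + (d : ℝ) / q))) ∧
    (P = 0 ∨ (P.totalDegree : ℝ) < γ * α + (1 - γ) * β) ∧
    (∃ C' : ℝ, 0 < C' ∧ ∃ r1 : ℝ, 0 < r1 ∧ ∀ r : ℝ, 0 < r → r < r1 →
      (r ^ (-(d : ℝ)) *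
          ∫ u in Metric.ball x0 r, |X u - MvPolynomial.eval (fun i => u i) P| ^ s) ^ (1 / s)
        ≤ C' * r ^ (γ * α + (1 - γ) * β)) :=
  stmt2_general d p q hp hq x0 X hX α β P hdegα hdegβ Cp hCp ap hap hestp Cq hCq aq haq hestq γ hγ0
    hγ1 s hs
end

section
/- Let γ > 1, α ∈ ℝ and p ≥ 1 with γ + αp > 0, and let F_{α,γ} be the lacunary comb. Then there exist constants 0 < c ≤ C such that, for every integer J ≥ 1 and every a with 2^{-J} + 2^{-γJ} ≤ a ≤ 2^{-J+1}, one has c·2^{-J(γ + αp - 1)} ≤ (1/a) ∫_{-a}^{a} |F_{α,γ}(x)|^p dx ≤ C·2^{-J(γ + αp - 1)}. -/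
/-!
Since `γ > 1`, the `j`-th tooth `[2^{-j}, 2^{-j} + 2^{-γj}]` lies in the dyadic interval
`[2^{-j}, 2^{-j+1})`, so the teeth are disjoint and `|F|^p` is the sum of their indicators with
heights `2^{-αpj}`. For `2^{-J} + 2^{-γJ} ≤ a ≤ 2^{-J+1}` the interval `[-a, a]` contains the
teeth with `j ≥ J` and meets the others at most in the point `a`, so the integral is the geometric
tail `∑_{j ≥ J} 2^{-(γ+αp)j} = s^J / (1 - s)` with `s = 2^{-(γ+αp)} < 1`. Dividing by
`a ∈ [2^{-J}, 2^{-J+1}]` gives the bounds with `c = 1 / (2(1 - s))` and `C = 1 / (1 - s)`.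
-/

open MeasureTheory

/-- The lacunary comb `F_{α,γ}`. -/
noncomputable def comb (α γ : ℝ) (x : ℝ) : ℝ :=
  ∑' j : ℕ,
    if 1 ≤ j ∧ (2 : ℝ) ^ (-(j : ℝ)) ≤ x ∧ x ≤ (2 : ℝ) ^ (-(j : ℝ)) + (2 : ℝ) ^ (-γ * (j : ℝ))
    then (2 : ℝ) ^ (-α * (j : ℝ)) else 0

open Function Set

theorem Pairwise.apply_tsum_indicator {ι α M N : Type*} [AddCommMonoid M] [TopologicalSpace M]
    [AddCommMonoid N] [TopologicalSpace N] {s : ι → Set α} (hs : Pairwise (Disjoint on s))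
    (f : ι → α → M) {g : M → N} (hg : g 0 = 0) (x : α) :
    g (∑' i, (s i).indicator (f i) x) = ∑' i, (s i).indicator (fun y => g (f i y)) x := by
  by_cases hx : ∃ i, x ∈ s i
  · obtain ⟨i, hi⟩ := hx
    have hk : ∀ k ≠ i, x ∉ s k := fun k hki hk => (hs hki).ne_of_mem hk hi rfl
    rw [tsum_eq_single i fun k hki => indicator_of_notMem (hk k hki) _,
      tsum_eq_single i fun k hki => indicator_of_notMem (hk k hki) _]
    simp only [indicator_of_mem hi]
  · simp [indicator_of_notMem (not_exists.mp hx _), hg]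

theorem hasSum_geometric_ite_le {r : ℝ} (h₀ : 0 ≤ r) (h₁ : r < 1) (J : ℕ) :
    HasSum (fun j : ℕ => if J ≤ j then r ^ j else 0) (r ^ J / (1 - r)) := by
  rw [← hasSum_nat_add_iff' J, Finset.sum_eq_zero fun i hi => if_neg (by simpa using hi), sub_zero]
  simpa [pow_add, mul_comm, div_eq_mul_inv] using (hasSum_geometric_of_lt_one h₀ h₁).mul_left (r ^ J)

def combTooth (γ : ℝ) (j : ℕ) : Set ℝ :=
  {x | 1 ≤ j ∧ (2 : ℝ) ^ (-(j : ℝ)) ≤ x ∧ x ≤ (2 : ℝ) ^ (-(j : ℝ)) + (2 : ℝ) ^ (-γ * (j : ℝ))}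

section
variable {α γ p a : ℝ} {j J : ℕ}

lemma comb_eq_tsum_indicator (α γ x : ℝ) :
    comb α γ x = ∑' j : ℕ, (combTooth γ j).indicator (fun _ => (2 : ℝ) ^ (-α * (j : ℝ))) x := by
  simp only [comb, indicator_apply, combTooth, mem_ofPred_eq]

lemma combTooth_eq_Icc (hj : 1 ≤ j) :
    combTooth γ j = Icc ((2 : ℝ) ^ (-(j : ℝ))) ((2 : ℝ) ^ (-(j : ℝ)) + (2 : ℝ) ^ (-γ * (j : ℝ))) := by
  ext x; simp [combTooth, hj]

lemma measurableSet_combTooth (γ : ℝ) (j : ℕ) : MeasurableSet (combTooth γ j) := by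
  rcases Nat.lt_or_ge j 1 with hj | hj
  · simp [combTooth, Nat.lt_one_iff.mp hj]
  · simp [combTooth_eq_Icc hj]

lemma combTooth_subset_Ico (hγ : 1 < γ) :
    combTooth γ j ⊆ Ico ((2 : ℝ) ^ (-(j : ℝ))) ((2 : ℝ) ^ (-(j : ℝ) + 1)) := by
  rintro x ⟨hj, hx₁, hx₂⟩
  have hj' : (1 : ℝ) ≤ j := by exact_mod_cast hj
  have hlen : (2 : ℝ) ^ (-γ * (j : ℝ)) < (2 : ℝ) ^ (-(j : ℝ)) :=
    Real.rpow_lt_rpow_of_exponent_lt one_lt_two (by nlinarith)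
  have hdouble : (2 : ℝ) ^ (-(j : ℝ) + 1) = 2 * (2 : ℝ) ^ (-(j : ℝ)) := by
    rw [Real.rpow_add_one two_ne_zero]; ring
  exact ⟨hx₁, by linarith⟩

lemma pairwise_disjoint_combTooth (hγ : 1 < γ) : Pairwise (Disjoint on combTooth γ) := by
  intro j k hne
  wlog hjk : j < k generalizing j k
  · exact (this hne.symm (by omega)).symm
  refine disjoint_left.mpr fun x hxj hxk => ?_
  have hk : x < (2 : ℝ) ^ (-(k : ℝ) + 1) := (combTooth_subset_Ico hγ hxk).2
  have hkj : (2 : ℝ) ^ (-(k : ℝ) + 1) ≤ (2 : ℝ) ^ (-(j : ℝ)) := by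
    have : (j : ℝ) + 1 ≤ k := by exact_mod_cast hjk
    exact Real.rpow_le_rpow_of_exponent_le one_le_two (by linarith)
  linarith [(combTooth_subset_Ico hγ hxj).1]

lemma abs_comb_rpow_eq_tsum_indicator (hγ : 1 < γ) (hp : p ≠ 0) (x : ℝ) :
    |comb α γ x| ^ p
      = ∑' j : ℕ, (combTooth γ j).indicator (fun _ => (2 : ℝ) ^ (-(α * p) * (j : ℝ))) x := by
  rw [comb_eq_tsum_indicator, (pairwise_disjoint_combTooth hγ).apply_tsum_indicator _
    (g := fun y : ℝ => |y| ^ p) (by simp [hp])]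
  congr with j
  congr with
  rw [abs_of_pos (by positivity), ← Real.rpow_mul zero_le_two]
  ring_nf

lemma combTooth_subset_Ioc (hγ : 0 ≤ γ) (hJj : J ≤ j)
    (ha : (2 : ℝ) ^ (-(J : ℝ)) + (2 : ℝ) ^ (-γ * (J : ℝ)) ≤ a) : combTooth γ j ⊆ Ioc (-a) a := by
  rintro x ⟨-, hx₁, hx₂⟩
  have hJj' : (J : ℝ) ≤ j := by exact_mod_cast hJj
  have h₁ : (2 : ℝ) ^ (-(j : ℝ)) ≤ (2 : ℝ) ^ (-(J : ℝ)) :=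
    Real.rpow_le_rpow_of_exponent_le one_le_two (by linarith)
  have h₂ : (2 : ℝ) ^ (-γ * (j : ℝ)) ≤ (2 : ℝ) ^ (-γ * (J : ℝ)) :=
    Real.rpow_le_rpow_of_exponent_le one_le_two (by nlinarith)
  have : (0 : ℝ) < (2 : ℝ) ^ (-(j : ℝ)) := by positivity
  exact ⟨by linarith, by linarith⟩

lemma combTooth_inter_Ioc_subset (hjJ : j < J) (ha : a ≤ (2 : ℝ) ^ (-(J : ℝ) + 1)) :
    combTooth γ j ∩ Ioc (-a) a ⊆ {a} := by
  rintro x ⟨⟨-, hx, -⟩, -, hxa⟩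
  have : (j : ℝ) + 1 ≤ J := by exact_mod_cast hjJ
  have : (2 : ℝ) ^ (-(J : ℝ) + 1) ≤ (2 : ℝ) ^ (-(j : ℝ)) :=
    Real.rpow_le_rpow_of_exponent_le one_le_two (by linarith)
  exact le_antisymm hxa (by linarith)

lemma volume_real_combTooth_inter_Ioc (hγ : 0 ≤ γ) (hJ : 1 ≤ J)
    (ha₁ : (2 : ℝ) ^ (-(J : ℝ)) + (2 : ℝ) ^ (-γ * (J : ℝ)) ≤ a)
    (ha₂ : a ≤ (2 : ℝ) ^ (-(J : ℝ) + 1)) :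
    volume.real (combTooth γ j ∩ Ioc (-a) a) = if J ≤ j then (2 : ℝ) ^ (-γ * (j : ℝ)) else 0 := by
  split_ifs with hJj
  · rw [inter_eq_left.mpr (combTooth_subset_Ioc hγ hJj ha₁), combTooth_eq_Icc (hJ.trans hJj),
      Real.volume_real_Icc_of_le (by linarith [show (0 : ℝ) < 2 ^ (-γ * (j : ℝ)) by positivity])]
    ring
  · rw [measureReal_def,
      measure_mono_null (combTooth_inter_Ioc_subset (not_le.mp hJj) ha₂) (measure_singleton a),
      ENNReal.toReal_zero]

lemma integral_abs_comb_rpow (hγ : 1 < γ) (hp : p ≠ 0) (h : 0 < γ + α * p) (hJ : 1 ≤ J)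
    (ha₁ : (2 : ℝ) ^ (-(J : ℝ)) + (2 : ℝ) ^ (-γ * (J : ℝ)) ≤ a)
    (ha₂ : a ≤ (2 : ℝ) ^ (-(J : ℝ) + 1)) :
    ∫ x in (-a)..a, |comb α γ x| ^ p
      = ((2 : ℝ) ^ (-(γ + α * p))) ^ J / (1 - (2 : ℝ) ^ (-(γ + α * p))) := by
  set s : ℝ := (2 : ℝ) ^ (-(γ + α * p))
  set F : ℕ → ℝ → ℝ := fun j => (combTooth γ j).indicator fun _ => (2 : ℝ) ^ (-(α * p) * (j : ℝ))
  have ha : -a ≤ a := by linarith [show (0 : ℝ) < 2 ^ (-(J : ℝ)) + 2 ^ (-γ * (J : ℝ)) by positivity]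
  have hF : ∀ j, ∫ x in Ioc (-a) a, F j x = if J ≤ j then s ^ j else 0 := by
    intro j
    rw [integral_indicator_const _ (measurableSet_combTooth γ j),
      measureReal_restrict_apply (measurableSet_combTooth γ j),
      volume_real_combTooth_inter_Ioc (by linarith) hJ ha₁ ha₂]
    split_ifs
    · rw [smul_eq_mul, ← Real.rpow_add zero_lt_two, ← Real.rpow_mul_natCast zero_le_two]
      ring_nf
    · exact zero_smul ℝ _
  have hs : s < 1 := Real.rpow_lt_one_of_one_lt_of_neg one_lt_two (by linarith)
  have hsum := hasSum_geometric_ite_le (r := s) (by positivity) hs J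
  have hF_norm : ∀ j, ∫ x in Ioc (-a) a, ‖F j x‖ = ∫ x in Ioc (-a) a, F j x := fun j => by
    congr 1 with x
    exact Real.norm_of_nonneg (indicator_nonneg (fun _ _ => by positivity) x)
  have hF_int : ∀ j, Integrable (F j) (volume.restrict (Ioc (-a) a)) := fun j =>
    (integrable_const _).indicator (measurableSet_combTooth γ j)
  calc ∫ x in (-a)..a, |comb α γ x| ^ p = ∫ x in Ioc (-a) a, ∑' j, F j x := by
        simp only [intervalIntegral.integral_of_le ha, abs_comb_rpow_eq_tsum_indicator hγ hp, F]
    _ = ∑' j, ∫ x in Ioc (-a) a, F j x :=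
        (integral_tsum_of_summable_integral_norm hF_int
          (hsum.summable.congr fun j => by rw [hF_norm, hF])).symm
    _ = s ^ J / (1 - s) := by simpa [hF] using hsum.tsum_eq

end

/-- two-sided power-law estimate for the local `L^p` averages of the
lacunary comb: for `2^{-J} + 2^{-γJ} ≤ a ≤ 2^{-J+1}`,
`(1/a) ∫_{-a}^a |F_{α,γ}|^p ≍ 2^{-J(γ + αp - 1)}`. -/
theorem stmt8 (α γ p : ℝ) (hγ : 1 < γ) (hp : 1 ≤ p) (h : 0 < γ + α * p) :
    ∃ c C : ℝ, 0 < c ∧ c ≤ C ∧ ∀ J : ℕ, 1 ≤ J → ∀ a : ℝ,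
      (2 : ℝ) ^ (-(J : ℝ)) + (2 : ℝ) ^ (-γ * (J : ℝ)) ≤ a →
      a ≤ (2 : ℝ) ^ (-(J : ℝ) + 1) →
      c * (2 : ℝ) ^ (-(J : ℝ) * (γ + α * p - 1))
          ≤ (1 / a) * ∫ x in (-a)..a, |comb α γ x| ^ p ∧
        (1 / a) * ∫ x in (-a)..a, |comb α γ x| ^ p
          ≤ C * (2 : ℝ) ^ (-(J : ℝ) * (γ + α * p - 1)) := by
  set s : ℝ := (2 : ℝ) ^ (-(γ + α * p))
  have hs : 0 < 1 - s := sub_pos.mpr (Real.rpow_lt_one_of_one_lt_of_neg one_lt_two (by linarith))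
  refine ⟨(2 * (1 - s))⁻¹, (1 - s)⁻¹, by positivity, ?_, fun J hJ a ha₁ ha₂ => ?_⟩
  · exact inv_anti₀ hs (by linarith)
  set A : ℝ := (2 : ℝ) ^ (-(J : ℝ))
  have hA : 0 < A := by positivity
  have hA_le : A ≤ a := by linarith [show (0 : ℝ) < 2 ^ (-γ * (J : ℝ)) by positivity]
  have hle_A : a ≤ 2 * A := by rwa [Real.rpow_add_one two_ne_zero, mul_comm] at ha₂
  have hscale : (2 : ℝ) ^ (-(J : ℝ) * (γ + α * p - 1)) = s ^ J / A := by
    rw [← Real.rpow_mul_natCast zero_le_two, eq_div_iff hA.ne', ← Real.rpow_add zero_lt_two]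
    ring_nf
  have hI : 0 ≤ s ^ J / (1 - s) := by positivity
  rw [integral_abs_comb_rpow hγ (by linarith) h hJ ha₁ ha₂, hscale, one_div_mul_eq_div]
  constructor
  · calc
      (2 * (1 - s))⁻¹ * (s ^ J / A) = s ^ J / (1 - s) / (2 * A) := by rw [mul_inv]; ring
      _ ≤ s ^ J / (1 - s) / a := div_le_div_of_nonneg_left hI (hA.trans_le hA_le) hle_A
  · calc
      s ^ J / (1 - s) / a ≤ s ^ J / (1 - s) / A := div_le_div_of_nonneg_left hI hA hA_le
      _ = (1 - s)⁻¹ * (s ^ J / A) := by ring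
end

section
/- Let p ≥ 1, a > 1, α ∈ ℝ, and let X : ℝ → ℝ be a function, locally in L^p(ℝ), that is self-similar at 0 with scaling ratio a and exponent α, i.e., a^α X(x) = X(ax) for almost every x. Then there exist functions ω₊, ω₋ : ℝ → ℝ, each periodic of period log a and with |ω₊|^p, |ω₋|^p integrable on [0, log a], such that X(x) = |x|^α ω₊(log x) for almost every x > 0 and X(x) = |x|^α ω₋(log(-x)) for almost every x < 0. -/
/-!
Iterating the scaling relation gives `X (a ^ n * x) = (a ^ α) ^ n * X x` for every `n : ℤ` and
almost every `x`. Writing `x = e^u` with `u = v + n log a`, `0 ≤ v < log a`, this says that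
`x ^ (-α) X x` depends only on `v`, i.e. equals the periodic extension of `u ↦ e^{-αu} X(e^u)` from
one period. The substitution `t = e^u` turns the `p`-integrability of that profile on a period
into the local `L^p` bound for `X` on `[1, a]`. The negative half-line is the positive one for
`x ↦ X (-x)`.
-/

open MeasureTheory Real Set

def IsSelfSimilar (a α : ℝ) (X : ℝ → ℝ) : Prop :=
  ∀ᵐ x : ℝ, a ^ α * X x = X (a * x)

namespace IsSelfSimilar

variable {a α : ℝ} {X : ℝ → ℝ}

theorem comp_neg (h : IsSelfSimilar a α X) : IsSelfSimilar a α (fun x => X (-x)) := by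
  filter_upwards [(Measure.measurePreserving_neg volume).quasiMeasurePreserving.ae h] with x hx
  rwa [← mul_neg]

theorem ae_forall_zpow (ha : 0 < a) (h : IsSelfSimilar a α X) :
    ∀ᵐ x : ℝ, ∀ n : ℤ, X (a ^ n * x) = (a ^ α) ^ n * X x := by
  have step : ∀ᵐ x : ℝ, ∀ n : ℤ, X (a ^ (n + 1) * x) = a ^ α * X (a ^ n * x) := by
    refine ae_all_iff.2 fun n => ?_
    filter_upwards [(Measure.quasiMeasurePreserving_smul volume
      (zpow_ne_zero n ha.ne')).ae h] with x hx
    rw [smul_eq_mul] at hx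
    rw [zpow_add_one₀ ha.ne', mul_comm _ a, mul_assoc, hx]
  filter_upwards [step] with x hx n
  induction n using Int.induction_on with
  | zero => simp
  | succ k ih => rw [hx, ih, zpow_add_one₀ (rpow_pos_of_pos ha α).ne']; ring
  | pred k ih =>
    have hk := hx (-k - 1)
    rw [sub_add_cancel, ih] at hk
    rw [zpow_sub_one₀ (rpow_pos_of_pos ha α).ne', mul_right_comm, hk]
    field_simp

end IsSelfSimilar

theorem integrableOn_rpow_abs_exp_mul_comp_exp {p α L : ℝ} {X : ℝ → ℝ}
    (hX : IntegrableOn (fun t => |X t| ^ p) (Icc 1 (exp L))) :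
    IntegrableOn (fun u => |exp (-(α * u)) * X (exp u)| ^ p) (Icc 0 L) := by
  have himage : exp '' Icc 0 L ⊆ Icc 1 (exp L) := by
    rintro _ ⟨u, hu, rfl⟩
    exact ⟨one_le_exp hu.1, exp_le_exp.2 hu.2⟩
  have hcov := (integrableOn_image_iff_integrableOn_abs_deriv_smul measurableSet_Icc
    (fun u _ => (hasDerivAt_exp u).hasDerivWithinAt) exp_injective.injOn _).1
    (hX.mono_set himage)
  -- `|e^{-αu} X(e^u)|^p = e^{-αpu-u} · (e^u |X(e^u)|^p)`, and the first factor is continuous.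
  have hweight : ContinuousOn (fun u => exp (-(α * p * u) - u)) (Icc 0 L) := by fun_prop
  refine (hcov.continuousOn_mul hweight isCompact_Icc).congr_fun (fun u _ => ?_) measurableSet_Icc
  beta_reduce
  rw [abs_mul, mul_rpow (abs_nonneg _) (abs_nonneg _), abs_of_pos (exp_pos _),
    abs_of_pos (exp_pos _), ← exp_mul, smul_eq_mul, ← mul_assoc, ← exp_add]
  ring_nf

noncomputable def selfSimilarProfile {a : ℝ} (ha : 1 < a) (α : ℝ) (X : ℝ → ℝ) (u : ℝ) : ℝ :=
  exp (-(α * toIcoMod (log_pos ha) 0 u)) * X (exp (toIcoMod (log_pos ha) 0 u))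

section selfSimilarProfile

variable {a : ℝ} (ha : 1 < a) {α : ℝ} {X : ℝ → ℝ}

theorem selfSimilarProfile_periodic : Function.Periodic (selfSimilarProfile ha α X) (log a) :=
  fun u => by simp only [selfSimilarProfile, toIcoMod_add_right]

theorem selfSimilarProfile_of_mem_Ico {u : ℝ} (hu : u ∈ Ico 0 (log a)) :
    selfSimilarProfile ha α X u = exp (-(α * u)) * X (exp u) := by
  rw [selfSimilarProfile, (toIcoMod_eq_self (log_pos ha)).2 (by rwa [zero_add])]

theorem integrableOn_selfSimilarProfile {p : ℝ}
    (hX : IntegrableOn (fun t => |X t| ^ p) (Icc 1 a)) :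
    IntegrableOn (fun u => |selfSimilarProfile ha α X u| ^ p) (Icc 0 (log a)) := by
  rw [← exp_log (zero_lt_one.trans ha)] at hX
  rw [integrableOn_Icc_iff_integrableOn_Ico]
  refine ((integrableOn_rpow_abs_exp_mul_comp_exp (α := α) hX).mono_set
    Ico_subset_Icc_self).congr_fun (fun u hu => ?_) measurableSet_Ico
  rw [selfSimilarProfile_of_mem_Ico ha hu]

theorem IsSelfSimilar.ae_eq_rpow_mul_selfSimilarProfile (h : IsSelfSimilar a α X) :
    ∀ᵐ x : ℝ, 0 < x → X x = x ^ α * selfSimilarProfile ha α X (log x) := by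
  have ha0 : 0 < a := by linarith
  filter_upwards [h.ae_forall_zpow ha0] with x hx hx0
  obtain ⟨n, hv⟩ : ∃ n : ℤ, toIcoMod (log_pos ha) 0 (log x) = log x - n * log a :=
    ⟨_, by rw [← self_sub_toIcoDiv_zsmul, zsmul_eq_mul]⟩
  have hexp : exp (log x - n * log a) = a ^ (-n) * x := by
    rw [zpow_neg, ← rpow_intCast, rpow_def_of_pos ha0, exp_sub, exp_log hx0, mul_comm (log a)]
    ring
  rw [selfSimilarProfile, hv, hexp, hx, ← rpow_mul_intCast ha0.le, rpow_def_of_pos ha0,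
    rpow_def_of_pos hx0, ← mul_assoc, ← mul_assoc, ← exp_add, ← exp_add]
  convert (one_mul (X x)).symm using 2
  rw [exp_eq_one_iff]
  push_cast
  ring

end selfSimilarProfile

/-- a function that is locally in `L^p` and self-similar at `0` of scaling
ratio `a > 1` and exponent `α` (`a^α X(x) = X(ax)` a.e.) can be written as
`X(x) = |x|^α ω₊(log x)` for a.e. `x > 0` and `X(x) = |x|^α ω₋(log(-x))` for a.e.
`x < 0`, with `ω₊, ω₋` periodic of period `log a` and `|ω₊|^p, |ω₋|^p` integrable on a
period. -/
theorem stmt12 (p a α : ℝ) (hp : 1 ≤ p) (ha : 1 < a) (X : ℝ → ℝ)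
    (hloc : ∀ R : ℝ, 0 < R →
      MemLp X (ENNReal.ofReal p) (volume.restrict (Set.Ioo (-R) R)))
    (hss : ∀ᵐ x : ℝ, a ^ α * X x = X (a * x)) :
    ∃ ωp ωm : ℝ → ℝ,
      (∀ u : ℝ, ωp (u + Real.log a) = ωp u) ∧
      (∀ u : ℝ, ωm (u + Real.log a) = ωm u) ∧
      IntegrableOn (fun u => |ωp u| ^ p) (Set.Icc 0 (Real.log a)) ∧
      IntegrableOn (fun u => |ωm u| ^ p) (Set.Icc 0 (Real.log a)) ∧
      (∀ᵐ x : ℝ, 0 < x → X x = |x| ^ α * ωp (Real.log x)) ∧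
      (∀ᵐ x : ℝ, x < 0 → X x = |x| ^ α * ωm (Real.log (-x))) := by
  have hX : IsSelfSimilar a α X := hss
  have hneg := Measure.measurePreserving_neg (volume : Measure ℝ)
  have hint : IntegrableOn (fun t => |X t| ^ p) (Ioo (-(a + 1)) (a + 1)) := by
    simpa [IntegrableOn, ENNReal.toReal_ofReal (by linarith : (0 : ℝ) ≤ p)] using
      (hloc (a + 1) (by linarith)).integrable_norm_rpow'
  have hint_neg : IntegrableOn (fun t => |X (-t)| ^ p) (Ioo (-(a + 1)) (a + 1)) := by
    simpa [Function.comp_def] using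
      (hneg.integrableOn_comp_preimage (Homeomorph.neg ℝ).measurableEmbedding).2 hint
  have hsub : Icc 1 a ⊆ Ioo (-(a + 1)) (a + 1) := Icc_subset_Ioo (by linarith) (by linarith)
  refine ⟨selfSimilarProfile ha α X, selfSimilarProfile ha α (fun x => X (-x)),
    selfSimilarProfile_periodic ha, selfSimilarProfile_periodic ha,
    integrableOn_selfSimilarProfile ha (hint.mono_set hsub),
    integrableOn_selfSimilarProfile ha (hint_neg.mono_set hsub), ?_, ?_⟩
  · filter_upwards [hX.ae_eq_rpow_mul_selfSimilarProfile ha] with x hx hx0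
    rw [abs_of_pos hx0, hx hx0]
  · filter_upwards [hneg.quasiMeasurePreserving.ae
      (hX.comp_neg.ae_eq_rpow_mul_selfSimilarProfile ha)] with x hx hx0
    rw [abs_of_neg hx0]
    simpa using hx (neg_pos.2 hx0)
end

section
/- Let p ≥ 1, T > 0, let ω : ℝ → ℝ be a measurable T-periodic function with ∫_0^T |ω(u)|^p du < ∞ and ω not almost everywhere zero, and let α ∈ ℝ with αp > -1. Then there exist constants 0 < c ≤ C such that, for all r ∈ (0,1], c·r^{αp} ≤ (1/r) ∫_0^r x^{αp} |ω(log x)|^p dx ≤ C·r^{αp}. -/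
/-!
Substituting `x = exp u` turns `∫_0^r x^{αp} |ω(log x)|^p dx` into `Λ(log r)`, where
`Λ L = ∫_{-∞}^L e^{γu} |ω u|^p du` and `γ = αp + 1 > 0`. Periodicity of `ω` gives
`Λ (L + T) = e^{γT} Λ L`, so `e^{-γL} Λ L` is `T`-periodic and is pinched between `e^{-γT} Λ 0` and
`Λ T`, which are positive and finite (the tail `Λ T` is at most a geometric series of period
integrals). Dividing `Λ (log r) ≍ r^γ` by `r` gives the claim.
-/

open MeasureTheory Set Function Real
open scoped ENNReal

noncomputable def expTail (γ : ℝ) (g : ℝ → ℝ≥0∞) (L : ℝ) : ℝ≥0∞ :=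
  ∫⁻ u in Iic L, ENNReal.ofReal (exp (γ * u)) * g u

lemma exists_nat_add_mul_mem_Ioc {T u : ℝ} (hT : 0 < T) (hu : u ≤ T) :
    ∃ n : ℕ, u + n * T ∈ Ioc 0 T := by
  refine ⟨⌊(T - u) / T⌋₊, ?_, ?_⟩
  · have h := Nat.lt_floor_add_one ((T - u) / T)
    rw [div_lt_iff₀ hT] at h
    linarith
  · have h := Nat.floor_le (div_nonneg (sub_nonneg.2 hu) hT.le)
    rw [le_div_iff₀ hT] at h
    linarith

section ExpTail

variable {γ c T : ℝ} {g : ℝ → ℝ≥0∞}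

lemma setLIntegral_exp_mul_preimage_add (hg : Periodic g c) (s : Set ℝ) :
    ∫⁻ u in (· + c) ⁻¹' s, ENNReal.ofReal (exp (γ * u)) * g u =
      ENNReal.ofReal (exp (-(γ * c))) * ∫⁻ u in s, ENNReal.ofReal (exp (γ * u)) * g u := by
  conv_rhs => rw [← (measurePreserving_add_right volume c).setLIntegral_comp_preimage_emb
    (measurableEmbedding_addRight c), ← lintegral_const_mul' _ _ ENNReal.ofReal_ne_top]
  refine lintegral_congr fun u => ?_
  rw [hg u, ← mul_assoc, ← ENNReal.ofReal_mul (exp_nonneg _), ← exp_add]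
  ring_nf

lemma expTail_eq_mul_expTail_add (hg : Periodic g T) (L : ℝ) :
    expTail γ g L = ENNReal.ofReal (exp (-(γ * T))) * expTail γ g (L + T) := by
  rw [expTail, expTail, ← setLIntegral_exp_mul_preimage_add hg, preimage_add_const_Iic,
    add_sub_cancel_right]

lemma expTail_mono : Monotone (expTail γ g) :=
  fun _ _ h => lintegral_mono_set (Iic_subset_Iic.2 h)

lemma periodic_exp_mul_expTail (hg : Periodic g T) :
    Periodic (fun L => ENNReal.ofReal (exp (-(γ * L))) * expTail γ g L) T := fun L => by
  beta_reduce
  rw [expTail_eq_mul_expTail_add (γ := γ) hg L, ← mul_assoc, ← ENNReal.ofReal_mul (exp_nonneg _),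
    ← exp_add]
  ring_nf

lemma setLIntegral_Ioc_le_expTail (hγ : 0 ≤ γ) :
    ∫⁻ u in Ioc 0 T, g u ≤ expTail γ g T :=
  calc ∫⁻ u in Ioc 0 T, g u ≤ ∫⁻ u in Ioc 0 T, ENNReal.ofReal (exp (γ * u)) * g u := by
        refine lintegral_mono_ae <| (ae_restrict_iff' measurableSet_Ioc).2 <| .of_forall ?_
        intro u hu
        refine le_mul_of_one_le_left' ?_
        rw [← ENNReal.ofReal_one]
        exact ENNReal.ofReal_le_ofReal (one_le_exp (mul_nonneg hγ hu.1.le))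
    _ ≤ expTail γ g T := lintegral_mono_set Ioc_subset_Iic_self

lemma expTail_le (hγ : 0 < γ) (hT : 0 < T) (hg : Periodic g T) :
    expTail γ g T ≤
      (1 - ENNReal.ofReal (exp (-(γ * T))))⁻¹ * ENNReal.ofReal (exp (γ * T)) *
        ∫⁻ u in Ioc 0 T, g u := by
  set q := ENNReal.ofReal (exp (-(γ * T)))
  have hcover : Iic T ⊆ ⋃ n : ℕ, (· + n * T) ⁻¹' Ioc 0 T := fun u hu =>
    mem_iUnion.2 (exists_nat_add_mul_mem_Ioc hT hu)
  have hpiece (n : ℕ) : ∫⁻ u in (· + n * T) ⁻¹' Ioc 0 T, ENNReal.ofReal (exp (γ * u)) * g u =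
      q ^ n * ∫⁻ u in Ioc 0 T, ENNReal.ofReal (exp (γ * u)) * g u := by
    rw [setLIntegral_exp_mul_preimage_add (hg.nat_mul n), ← ENNReal.ofReal_pow (exp_nonneg _),
      ← exp_nat_mul]
    ring_nf
  have hperiod : ∫⁻ u in Ioc 0 T, ENNReal.ofReal (exp (γ * u)) * g u ≤
      ENNReal.ofReal (exp (γ * T)) * ∫⁻ u in Ioc 0 T, g u := by
    rw [← lintegral_const_mul' _ _ ENNReal.ofReal_ne_top]
    refine lintegral_mono_ae <| (ae_restrict_iff' measurableSet_Ioc).2 <| .of_forall ?_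
    intro u hu
    gcongr
    exact hu.2
  calc expTail γ g T
      ≤ ∑' n : ℕ, ∫⁻ u in (· + n * T) ⁻¹' Ioc 0 T, ENNReal.ofReal (exp (γ * u)) * g u :=
        (lintegral_mono_set hcover).trans (lintegral_iUnion_le _ _)
    _ = (1 - q)⁻¹ * ∫⁻ u in Ioc 0 T, ENNReal.ofReal (exp (γ * u)) * g u := by
        simp only [hpiece, ENNReal.tsum_mul_right, ENNReal.tsum_geometric]
    _ ≤ _ := by
        rw [mul_assoc]
        gcongr

lemma exists_mem_Ico_expTail_eq (hT : 0 < T) (hg : Periodic g T) (L : ℝ) :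
    ∃ y ∈ Ico 0 T, expTail γ g L =
      ENNReal.ofReal (exp (-(γ * y))) * expTail γ g y * ENNReal.ofReal (exp (γ * L)) := by
  obtain ⟨y, hy, hLy⟩ := (periodic_exp_mul_expTail (γ := γ) hg).exists_mem_Ico₀ hT L
  refine ⟨y, hy, ?_⟩
  rw [← hLy, mul_comm, ← mul_assoc, ← ENNReal.ofReal_mul (exp_nonneg _), ← exp_add, add_neg_cancel,
    exp_zero, ENNReal.ofReal_one, one_mul]

lemma expTail_le_mul_exp (hγ : 0 ≤ γ) (hT : 0 < T) (hg : Periodic g T) (L : ℝ) :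
    expTail γ g L ≤ expTail γ g T * ENNReal.ofReal (exp (γ * L)) := by
  obtain ⟨y, hy, hL⟩ := exists_mem_Ico_expTail_eq hT hg L
  rw [hL]
  gcongr
  refine (mul_le_of_le_one_left' ?_).trans (expTail_mono hy.2.le)
  exact ENNReal.ofReal_le_one.2 (exp_le_one_iff.2 (by nlinarith [hy.1]))

lemma mul_exp_le_expTail (hγ : 0 ≤ γ) (hT : 0 < T) (hg : Periodic g T) (L : ℝ) :
    ENNReal.ofReal (exp (-(γ * T))) * expTail γ g 0 * ENNReal.ofReal (exp (γ * L)) ≤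
      expTail γ g L := by
  obtain ⟨y, hy, hL⟩ := exists_mem_Ico_expTail_eq hT hg L
  rw [hL]
  gcongr
  · exact hy.2.le
  · exact expTail_mono hy.1

theorem exists_bounds_expTail (hγ : 0 < γ) (hT : 0 < T) (hg : Periodic g T)
    (hfin : ∫⁻ u in Ioc 0 T, g u ≠ ∞) (hpos : ∫⁻ u in Ioc 0 T, g u ≠ 0) :
    ∃ c C : ℝ, 0 < c ∧ c ≤ C ∧ ∀ L : ℝ,
      c * exp (γ * L) ≤ (expTail γ g L).toReal ∧ (expTail γ g L).toReal ≤ C * exp (γ * L) := by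
  set q := ENNReal.ofReal (exp (-(γ * T)))
  have hq_pos : q ≠ 0 := (ENNReal.ofReal_pos.2 (exp_pos _)).ne'
  have hq_lt : q < 1 := ENNReal.ofReal_lt_one.2 (exp_lt_one_iff.2 (by nlinarith))
  have hT_fin : expTail γ g T ≠ ∞ := ne_top_of_le_ne_top (ENNReal.mul_ne_top
    (ENNReal.mul_ne_top (ENNReal.inv_ne_top.2 (tsub_pos_of_lt hq_lt).ne') ENNReal.ofReal_ne_top)
    hfin) (expTail_le hγ hT hg)
  have hT_pos : expTail γ g T ≠ 0 :=
    (pos_iff_ne_zero.2 hpos).trans_le (setLIntegral_Ioc_le_expTail hγ.le) |>.ne'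
  have h0_pos : expTail γ g 0 ≠ 0 := by
    rw [expTail_eq_mul_expTail_add hg 0, zero_add]
    exact mul_ne_zero hq_pos hT_pos
  have hqΛ_le : q * expTail γ g 0 ≤ expTail γ g T :=
    (mul_le_of_le_one_left' hq_lt.le).trans (expTail_mono hT.le)
  have hL_fin (L : ℝ) : expTail γ g L ≠ ∞ := ne_top_of_le_ne_top
    (ENNReal.mul_ne_top hT_fin ENNReal.ofReal_ne_top) (expTail_le_mul_exp hγ.le hT hg L)
  refine ⟨(q * expTail γ g 0).toReal, (expTail γ g T).toReal,
    ENNReal.toReal_pos (mul_ne_zero hq_pos h0_pos) (ne_top_of_le_ne_top hT_fin hqΛ_le),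
    ENNReal.toReal_mono hT_fin hqΛ_le, fun L => ⟨?_, ?_⟩⟩
  · rw [← ENNReal.toReal_ofReal (exp_nonneg (γ * L)), ← ENNReal.toReal_mul]
    exact ENNReal.toReal_mono (hL_fin L) (mul_exp_le_expTail hγ.le hT hg L)
  · rw [← ENNReal.toReal_ofReal (exp_nonneg (γ * L)), ← ENNReal.toReal_mul]
    exact ENNReal.toReal_mono (ENNReal.mul_ne_top hT_fin ENNReal.ofReal_ne_top)
      (expTail_le_mul_exp hγ.le hT hg L)

end ExpTail

lemma integral_rpow_mul_comp_log {h : ℝ → ℝ} (hh : Measurable h) (h_nonneg : ∀ u, 0 ≤ h u)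
    (β : ℝ) {r : ℝ} (hr : 0 < r) :
    ∫ x in Ioc 0 r, x ^ β * h (log x) =
      (expTail (β + 1) (fun u => ENNReal.ofReal (h u)) (log r)).toReal := by
  rw [← exp_log hr, ← image_exp_Iic, integral_image_eq_integral_abs_deriv_smul measurableSet_Iic
    (fun x _ => (hasDerivAt_exp x).hasDerivWithinAt) exp_injective.injOn, exp_log hr]
  have hchange (u : ℝ) : |exp u| • (exp u ^ β * h (log (exp u))) = exp ((β + 1) * u) * h u := by
    rw [smul_eq_mul, abs_of_pos (exp_pos u), log_exp, ← exp_mul, ← mul_assoc, ← exp_add]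
    ring_nf
  simp only [hchange]
  rw [integral_eq_lintegral_of_nonneg_ae (.of_forall fun u => by have := h_nonneg u; positivity)
    (by fun_prop), expTail]
  simp only [ENNReal.ofReal_mul (exp_nonneg _)]

theorem stmt14_general (p T α : ℝ) (hT : 0 < T)
    (ω : ℝ → ℝ) (hmeas : Measurable ω) (hper : ∀ u : ℝ, ω (u + T) = ω u)
    (hint : IntegrableOn (fun u => |ω u| ^ p) (Set.Icc 0 T))
    (hnz : ¬ (∀ᵐ u ∂(volume.restrict (Set.Icc 0 T)), ω u = 0))
    (hα : -1 < α * p) :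
    ∃ c C : ℝ, 0 < c ∧ c ≤ C ∧ ∀ r ∈ Set.Ioc (0 : ℝ) 1,
      c * r ^ (α * p)
          ≤ (1 / r) * ∫ x in Set.Ioc (0 : ℝ) r, x ^ (α * p) * |ω (Real.log x)| ^ p ∧
        (1 / r) * ∫ x in Set.Ioc (0 : ℝ) r, x ^ (α * p) * |ω (Real.log x)| ^ p
          ≤ C * r ^ (α * p) := by
  set g : ℝ → ℝ≥0∞ := fun u => ENNReal.ofReal (|ω u| ^ p)
  have hfin : ∫⁻ u in Ioc 0 T, g u ≠ ∞ := by
    refine ne_top_of_le_ne_top ?_ (lintegral_mono_set Ioc_subset_Icc_self)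
    exact (hasFiniteIntegral_iff_ofReal (.of_forall fun u => by positivity)).1 hint.2 |>.ne
  have hpos : ∫⁻ u in Ioc 0 T, g u ≠ 0 := by
    rw [Ne, lintegral_eq_zero_iff (by fun_prop), restrict_Ioc_eq_restrict_Icc]
    refine fun h => hnz (h.mono fun u hu => ?_)
    have : |ω u| ^ p = 0 := le_antisymm (ENNReal.ofReal_eq_zero.1 hu) (by positivity)
    simpa using ((rpow_eq_zero_iff_of_nonneg (abs_nonneg _)).1 this).1
  obtain ⟨c, C, hc, hcC, hbounds⟩ := exists_bounds_expTail (γ := α * p + 1) (by linarith) hT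
    (fun u => by simp only [g, hper u]) hfin hpos
  refine ⟨c, C, hc, hcC, fun r ⟨hr, _⟩ => ?_⟩
  have hscale : (1 / r) * exp ((α * p + 1) * log r) = r ^ (α * p) := by
    rw [mul_comm (α * p + 1), ← rpow_def_of_pos hr, rpow_add_one hr.ne']
    field_simp
  have hI := integral_rpow_mul_comp_log (h := fun u => |ω u| ^ p) (by fun_prop)
    (fun u => by positivity) (α * p) hr
  rw [hI, ← hscale, mul_left_comm c, mul_left_comm C]
  exact ⟨by gcongr; exact (hbounds _).1, by gcongr; exact (hbounds _).2⟩

/-- if `ω` is measurable, `T`-periodic, with `|ω|^p` integrable on a period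
and `ω` not a.e. zero, and `αp > -1`, then
`(1/r) ∫_0^r x^{αp} |ω(log x)|^p dx ≍ r^{αp}` for `r ∈ (0,1]`. -/
theorem stmt14 (p T α : ℝ) (hp : 1 ≤ p) (hT : 0 < T)
    (ω : ℝ → ℝ) (hmeas : Measurable ω) (hper : ∀ u : ℝ, ω (u + T) = ω u)
    (hint : IntegrableOn (fun u => |ω u| ^ p) (Set.Icc 0 T))
    (hnz : ¬ (∀ᵐ u ∂(volume.restrict (Set.Icc 0 T)), ω u = 0))
    (hα : -1 < α * p) :
    ∃ c C : ℝ, 0 < c ∧ c ≤ C ∧ ∀ r ∈ Set.Ioc (0 : ℝ) 1,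
      c * r ^ (α * p)
          ≤ (1 / r) * ∫ x in Set.Ioc (0 : ℝ) r, x ^ (α * p) * |ω (Real.log x)| ^ p ∧
        (1 / r) * ∫ x in Set.Ioc (0 : ℝ) r, x ^ (α * p) * |ω (Real.log x)| ^ p
          ≤ C * r ^ (α * p) :=
  stmt14_general p T α hT ω hmeas hper hint hnz hα
end

section
/- Let α > -1 and β > 0, and for x > 0 define D(x) = ∫_0^x t^α sin(t^{-β}) dt (the primitive of the chirp t^α sin(1/t^β)). Then D(x) = (1/β) x^{α+β+1} cos(x^{-β}) + O(x^{α+2β+1}) as x → 0⁺; that is, there exist C > 0 and x₁ > 0 such that |D(x) - (1/β) x^{α+β+1} cos(x^{-β})| ≤ C x^{α+2β+1} for all 0 < x < x₁. In particular the p-exponent of the primitive of the chirp at 0 exceeds that of the chirp by β + 1 rather than by 1. -/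
/-!
Integrating by parts against `d/dt cos(t^{-β}) = β t^{-β-1} sin(t^{-β})` trades the chirp
`t^α sin(t^{-β})` for the boundary term `(1/β) t^{α+β+1} cos(t^{-β})` plus a chirp of order
`α + β`; a second integration by parts turns the latter into a boundary term and a chirp of
order `α + 2β`, whose primitive is trivially `O(x^{α+2β+1})`. Concretely,
`G = primitiveApprox α β`, `G(t) = (1/β) t^{a} cos(t^{-β}) + (a/β²) t^{a+β} sin(t^{-β})` with
`a = α + β + 1`, satisfies `G' = t^α sin(t^{-β}) + (a (a+β)/β²) t^{α+2β} sin(t^{-β})` and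
`G(0⁺) = 0`.
-/

open MeasureTheory Real Set Filter Topology intervalIntegral

namespace Chirp

/-- The chirp `|t|^α sin(1/|t|^β)` for `t > 0`; for `t < 0` the real power is a junk value. -/
noncomputable def chirp (α β t : ℝ) : ℝ := t ^ α * sin (t ^ (-β))

noncomputable def primitiveApprox (α β t : ℝ) : ℝ :=
  (1 / β) * (t ^ (α + β + 1) * cos (t ^ (-β))) +
    ((α + β + 1) / β ^ 2) * (t ^ (α + 2 * β + 1) * sin (t ^ (-β)))

lemma intervalIntegrable_chirp {r : ℝ} (hr : -1 < r) (β x : ℝ) :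
    IntervalIntegrable (chirp r β) volume 0 x := by
  refine (intervalIntegrable_rpow' hr).mono_fun
    (by unfold chirp; exact Measurable.aestronglyMeasurable (by fun_prop)) ?_
  filter_upwards with t
  rw [chirp, norm_mul]
  exact mul_le_of_le_one_right (norm_nonneg _) (abs_sin_le_one _)

lemma abs_chirp_le (r β : ℝ) {t : ℝ} (ht : 0 ≤ t) : |chirp r β t| ≤ t ^ r := by
  rw [chirp, abs_mul, abs_of_nonneg (rpow_nonneg ht _)]
  exact mul_le_of_le_one_right (rpow_nonneg ht _) (abs_sin_le_one _)

lemma abs_integral_chirp_le {r : ℝ} (hr : -1 < r) (β : ℝ) {x : ℝ} (hx : 0 ≤ x) :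
    |∫ t in (0 : ℝ)..x, chirp r β t| ≤ x ^ (r + 1) / (r + 1) := by
  calc |∫ t in (0 : ℝ)..x, chirp r β t|
      ≤ ∫ t in (0 : ℝ)..x, |chirp r β t| := abs_integral_le_integral_abs hx
    _ ≤ ∫ t in (0 : ℝ)..x, t ^ r :=
        integral_mono_on hx (intervalIntegrable_chirp hr β x).abs
          (intervalIntegrable_rpow' hr) fun t ht => abs_chirp_le r β ht.1
    _ = x ^ (r + 1) / (r + 1) := by
        rw [integral_rpow (Or.inl hr), zero_rpow (by linarith), sub_zero]

lemma hasDerivAt_primitiveApprox (α : ℝ) {β : ℝ} (hβ : β ≠ 0) {t : ℝ} (ht : 0 < t) :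
    HasDerivAt (primitiveApprox α β)
      (chirp α β t + ((α + β + 1) * (α + 2 * β + 1) / β ^ 2) * chirp (α + 2 * β) β t) t := by
  have hpow (p : ℝ) : HasDerivAt (fun t : ℝ => t ^ p) (p * t ^ (p - 1)) t :=
    hasDerivAt_rpow_const (Or.inl ht.ne')
  have hcos := (hasDerivAt_cos _).comp t (hpow (-β))
  have hsin := (hasDerivAt_sin _).comp t (hpow (-β))
  refine ((((hpow _).mul hcos).const_mul (1 / β)).add
    (((hpow _).mul hsin).const_mul ((α + β + 1) / β ^ 2))).congr_deriv ?_
  have e₁ : t ^ (α + β + 1) * t ^ (-β - 1) = t ^ α := by rw [← rpow_add ht]; ring_nf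
  have e₂ : t ^ (α + 2 * β + 1) * t ^ (-β - 1) = t ^ (α + β) := by rw [← rpow_add ht]; ring_nf
  rw [show α + β + 1 - 1 = α + β by ring, show α + 2 * β + 1 - 1 = α + 2 * β by ring, ← e₂,
    chirp, chirp, ← e₁, Function.comp_apply, Function.comp_apply]
  field_simp
  ring

lemma tendsto_rpow_mul_nhdsGT_zero {p : ℝ} (hp : 0 < p) {g : ℝ → ℝ} (hg : ∀ t, |g t| ≤ 1) :
    Tendsto (fun t => t ^ p * g t) (𝓝[>] 0) (𝓝 0) := by
  have hpow : Tendsto (fun t : ℝ => t ^ p) (𝓝[>] 0) (𝓝 0) := by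
    simpa [zero_rpow hp.ne'] using
      (continuousAt_rpow_const 0 p (Or.inr hp.le)).tendsto.mono_left nhdsWithin_le_nhds
  exact hpow.zero_mul_isBoundedUnder_le (isBoundedUnder_of ⟨1, fun t => hg t⟩)

lemma tendsto_primitiveApprox_nhdsGT_zero {α β : ℝ} (hα : -1 < α) (hβ : 0 < β) :
    Tendsto (primitiveApprox α β) (𝓝[>] 0) (𝓝 0) := by
  have h₁ := (tendsto_rpow_mul_nhdsGT_zero (p := α + β + 1) (by linarith)
    fun t => abs_cos_le_one (t ^ (-β))).const_mul (1 / β)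
  have h₂ := (tendsto_rpow_mul_nhdsGT_zero (p := α + 2 * β + 1) (by linarith)
    fun t => abs_sin_le_one (t ^ (-β))).const_mul ((α + β + 1) / β ^ 2)
  have h := h₁.add h₂
  rw [mul_zero, mul_zero, add_zero] at h
  exact h

lemma integral_chirp_eq {α β : ℝ} (hα : -1 < α) (hβ : 0 < β) {x : ℝ} (hx : 0 < x) :
    (∫ t in (0 : ℝ)..x, chirp α β t) - (1 / β) * x ^ (α + β + 1) * cos (x ^ (-β)) =
      ((α + β + 1) / β ^ 2) * (x ^ (α + 2 * β + 1) * sin (x ^ (-β)) -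
        (α + 2 * β + 1) * ∫ t in (0 : ℝ)..x, chirp (α + 2 * β) β t) := by
  have hint := intervalIntegrable_chirp (r := α + 2 * β) (by linarith) β x
  have hftc := integral_eq_sub_of_hasDerivAt_of_tendsto hx
    (fun t ht => hasDerivAt_primitiveApprox α hβ.ne' ht.1)
    ((intervalIntegrable_chirp hα β x).add (hint.const_mul _))
    (tendsto_primitiveApprox_nhdsGT_zero hα hβ)
    ((hasDerivAt_primitiveApprox α hβ.ne' hx).continuousAt.tendsto.mono_left nhdsWithin_le_nhds)
  rw [integral_add (intervalIntegrable_chirp hα β x) (hint.const_mul _),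
    intervalIntegral.integral_const_mul, primitiveApprox, sub_zero] at hftc
  linear_combination hftc

end Chirp

open Chirp in
/-- asymptotics of the primitive of the chirp: for `α > -1`, `β > 0`,
`∫_0^x t^α sin(t^{-β}) dt = (1/β) x^{α+β+1} cos(x^{-β}) + O(x^{α+2β+1})` as `x → 0⁺`. -/
theorem stmt16 (α β : ℝ) (hα : -1 < α) (hβ : 0 < β) :
    ∃ C : ℝ, 0 < C ∧ ∃ x₁ : ℝ, 0 < x₁ ∧ ∀ x : ℝ, 0 < x → x < x₁ →
      |(∫ t in (0 : ℝ)..x, t ^ α * Real.sin (t ^ (-β))) -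
          (1 / β) * x ^ (α + β + 1) * Real.cos (x ^ (-β))|
        ≤ C * x ^ (α + 2 * β + 1) := by
  have ha : 0 < α + β + 1 := by linarith
  have hb : 0 < α + 2 * β + 1 := by linarith
  refine ⟨2 * ((α + β + 1) / β ^ 2), by positivity, 1, one_pos, fun x hx _ => ?_⟩
  have hsin : |x ^ (α + 2 * β + 1) * sin (x ^ (-β))| ≤ x ^ (α + 2 * β + 1) :=
    abs_chirp_le _ β hx.le
  have hrest : (α + 2 * β + 1) * |∫ t in (0 : ℝ)..x, chirp (α + 2 * β) β t| ≤
      x ^ (α + 2 * β + 1) := by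
    have := abs_integral_chirp_le (r := α + 2 * β) (by linarith) β hx.le
    rw [le_div_iff₀ hb] at this
    linarith
  calc _ = |((α + β + 1) / β ^ 2) * (x ^ (α + 2 * β + 1) * sin (x ^ (-β)) -
          (α + 2 * β + 1) * ∫ t in (0 : ℝ)..x, chirp (α + 2 * β) β t)| :=
        congrArg abs (integral_chirp_eq hα hβ hx)
    _ ≤ ((α + β + 1) / β ^ 2) * (x ^ (α + 2 * β + 1) + x ^ (α + 2 * β + 1)) := by
        rw [abs_mul, abs_of_pos (by positivity)]
        gcongr
        refine (abs_sub _ _).trans (add_le_add hsin ?_)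
        rwa [abs_mul, abs_of_pos hb]
    _ = _ := by ring
end
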